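/- arXiv:2511.02789 — 2 statements merged into one kernel-verified Lean document; each statement's English description precedes it below -/
import Mathlib

section
/- For functions f, g on ℝ² with finite rectangular Haar expansions, the bi-parameter square function of the mixed paraproduct π³_g(f) satisfies the pointwise bound S(π³_g f)(x,y) ≤ S₂M₁(f)(x,y) · M₂S₁(g)(x,y) for all (x,y) ∈ ℝ². -/
open MeasureTheory Set
open scoped ENNReal Classical

noncomputable section

/-- The dyadic interval `[n·2^k, (n+1)·2^k)`, indexed by `p = (k, n)`. -/
def dyadicI (p : ℤ × ℤ) : Set ℝ := Set.Ico ((p.2 : ℝ) * 2 ^ p.1) ((p.2 + 1 : ℝ) * 2 ^ p.1)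

/-- The length `|I| = 2^k` of the dyadic interval indexed by `p = (k, n)`. -/
def dlen (p : ℤ × ℤ) : ℝ := (2 : ℝ) ^ p.1

/-- The `L²`-normalized Haar function of the dyadic interval indexed by `p = (k, n)`. -/
def haar (p : ℤ × ℤ) (x : ℝ) : ℝ :=
  (2 : ℝ) ^ (-(p.1 : ℝ) / 2) *
    ((dyadicI (p.1 - 1, 2 * p.2)).indicator 1 x - (dyadicI (p.1 - 1, 2 * p.2 + 1)).indicator 1 x)

/-- The normalized indicator `χ_I/|I|`. -/
def nind (p : ℤ × ℤ) (x : ℝ) : ℝ := (dlen p)⁻¹ * (dyadicI p).indicator 1 x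

/-- Index of a dyadic rectangle `R = I × J`. -/
abbrev RectIx : Type := (ℤ × ℤ) × (ℤ × ℤ)

/-- The dyadic rectangle `I × J`. -/
def dyadicR (r : RectIx) : Set (ℝ × ℝ) := (dyadicI r.1) ×ˢ (dyadicI r.2)

/-- The area `|R| = |I|·|J|`. -/
def rlen (r : RectIx) : ℝ := dlen r.1 * dlen r.2

/-- The rectangular Haar function `h_R = h_I ⊗ h_J`. -/
def haarR (r : RectIx) (z : ℝ × ℝ) : ℝ := haar r.1 z.1 * haar r.2 z.2

/-- The rectangular Haar coefficient `f_R = ⟨f, h_R⟩`. -/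
def haarCoefR (f : ℝ × ℝ → ℝ) (r : RectIx) : ℝ := ∫ z : ℝ × ℝ, f z * haarR r z

/-- The average of `g` over the dyadic rectangle `R`. -/
def avgR (g : ℝ × ℝ → ℝ) (r : RectIx) : ℝ := (rlen r)⁻¹ * ∫ z in dyadicR r, g z

/-- The average of `u` over the dyadic interval `I`. -/
def avgI (u : ℝ → ℝ) (p : ℤ × ℤ) : ℝ := (dlen p)⁻¹ * ∫ x in dyadicI p, u x

/-- The Haar coefficient in the second variable, `f_J(x) = ⟨f(x,·), h_J⟩`. -/
def coefSnd (f : ℝ × ℝ → ℝ) (q : ℤ × ℤ) (x : ℝ) : ℝ := ∫ y : ℝ, f (x, y) * haar q y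

/-- The Haar coefficient in the first variable, `f_I(y) = ⟨f(·,y), h_I⟩`. -/
def coefFst (f : ℝ × ℝ → ℝ) (p : ℤ × ℤ) (y : ℝ) : ℝ := ∫ x : ℝ, f (x, y) * haar p x

/-- The bi-parameter dyadic square function. -/
def sqR (f : ℝ × ℝ → ℝ) (z : ℝ × ℝ) : ℝ :=
  Real.sqrt (∑' r : RectIx, (haarCoefR f r) ^ 2 * (rlen r)⁻¹ * (dyadicR r).indicator 1 z)

/-- The strong dyadic maximal function. -/
def strongMax (g : ℝ × ℝ → ℝ) (z : ℝ × ℝ) : ℝ :=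
  ⨆ r : {r : RectIx // z ∈ dyadicR r}, |avgR g r.1|

/-- The one-parameter dyadic maximal function. -/
def dyadMax (u : ℝ → ℝ) (x : ℝ) : ℝ := ⨆ p : {p : ℤ × ℤ // x ∈ dyadicI p}, |avgI u p.1|

/-- `f` is a finite linear combination of indicators of dyadic intervals. -/
def IsDyadicSimple (f : ℝ → ℝ) : Prop :=
  ∃ (s : Finset (ℤ × ℤ)) (c : ℤ × ℤ → ℝ),
    f = fun x => ∑ p ∈ s, c p * (dyadicI p).indicator 1 x

/-- `g` is a finite linear combination of indicators of dyadic rectangles. -/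
def IsDyadicSimple2 (g : ℝ × ℝ → ℝ) : Prop :=
  ∃ (s : Finset RectIx) (c : RectIx → ℝ),
    g = fun z => ∑ r ∈ s, c r * (dyadicR r).indicator 1 z

/-- `f` is a finite linear combination of rectangular Haar functions. -/
def FinHaar2 (f : ℝ × ℝ → ℝ) : Prop :=
  ∃ (s : Finset RectIx) (c : RectIx → ℝ), f = fun z => ∑ r ∈ s, c r * haarR r z

/-- The paraproduct `π²_g(f) = Σ_R f_R ⟨g⟩_R h_R`. -/
def pi2 (g f : ℝ × ℝ → ℝ) (z : ℝ × ℝ) : ℝ :=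
  ∑' r : RectIx, haarCoefR f r * avgR g r * haarR r z

/-- The mixed paraproduct `π³_g(f) = Σ_{I,J} ⟨f_J⟩_I ⟨g_I⟩_J h_I ⊗ h_J`. -/
def pi3 (g f : ℝ × ℝ → ℝ) (z : ℝ × ℝ) : ℝ :=
  ∑' r : RectIx, avgI (coefSnd f r.2) r.1 * avgI (coefFst g r.1) r.2 * haarR r z

/-- The mixed paraproduct `π⁴_g(f) = Σ_{I,J} ⟨f_J⟩_I g_{I×J} h_I ⊗ χ̄_J`. -/
def pi4 (g f : ℝ × ℝ → ℝ) (z : ℝ × ℝ) : ℝ :=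
  ∑' r : RectIx, avgI (coefSnd f r.2) r.1 * haarCoefR g r * haar r.1 z.1 * nind r.2 z.2

/-- The mixed square-maximal operator `S₂M₁`. -/
def S2M1 (f : ℝ × ℝ → ℝ) (z : ℝ × ℝ) : ℝ :=
  Real.sqrt (∑' q : ℤ × ℤ,
    (dyadMax (coefSnd f q) z.1) ^ 2 * (dlen q)⁻¹ * (dyadicI q).indicator 1 z.2)

/-- The mixed maximal-square operator `M₂S₁`. -/
def M2S1 (g : ℝ × ℝ → ℝ) (z : ℝ × ℝ) : ℝ :=
  ⨆ q : {q : ℤ × ℤ // z.2 ∈ dyadicI q},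
    Real.sqrt (∑' p : ℤ × ℤ,
      (avgI (coefFst g p) q.1) ^ 2 * (dlen p)⁻¹ * (dyadicI p).indicator 1 z.1)

/-- The mixed maximal-square operator `M₁S₂`. -/
def M1S2 (f : ℝ × ℝ → ℝ) (z : ℝ × ℝ) : ℝ :=
  ⨆ p : {p : ℤ × ℤ // z.1 ∈ dyadicI p},
    Real.sqrt (∑' q : ℤ × ℤ,
      (avgI (coefSnd f q) p.1) ^ 2 * (dlen q)⁻¹ * (dyadicI q).indicator 1 z.2)

/-- The `H^p_d(ℝ⊗ℝ)` quasi-norm `‖M(f)‖_{L^p}`. -/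
def hpNorm (p : ℝ) (f : ℝ × ℝ → ℝ) : ℝ≥0∞ :=
  eLpNorm (strongMax f) (ENNReal.ofReal p) volume

/-! The Haar coefficients of `π³_g f` are `⟨f_J⟩_I ⟨g_I⟩_J`. On a rectangle `I × J` containing
`(x, y)` one has `|⟨f_J⟩_I| ≤ M(f_J)(x)`, so summing first over `I` bounds `S(π³_g f)(x, y)²` by
`Σ_J M(f_J)(x)² χ_J(y)/|J| · Σ_I ⟨g_I⟩_J² χ_I(x)/|I|`, and since `y ∈ J` the inner sum is at most
`M₂S₁(g)(x, y)²`. Finite Haar expansions make every series a finite sum and every supremum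
bounded, which matters because `∑'` of a non-summable family and `⨆` of an unbounded one are `0`. -/

lemma dlen_pos (p : ℤ × ℤ) : 0 < dlen p := zpow_pos two_pos _

lemma mem_dyadicI_iff {x : ℝ} {p : ℤ × ℤ} : x ∈ dyadicI p ↔ ⌊x / 2 ^ p.1⌋ = p.2 := by
  have h : (0 : ℝ) < 2 ^ p.1 := zpow_pos two_pos _
  rw [Int.floor_eq_iff, dyadicI, mem_Ico, le_div_iff₀ h, div_lt_iff₀ h]

lemma floor_div_two_zpow_of_le {k k' : ℤ} (h : k ≤ k') (x : ℝ) :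
    ⌊x / 2 ^ k'⌋ = ⌊x / 2 ^ k⌋ / 2 ^ (k' - k).toNat := by
  have hsplit : (2 : ℝ) ^ k' = 2 ^ k * ((2 ^ (k' - k).toNat : ℕ) : ℝ) := by
    rw [Nat.cast_pow, Nat.cast_ofNat, ← zpow_natCast, Int.toNat_of_nonneg (by omega),
      ← zpow_add₀ two_ne_zero, add_sub_cancel]
  rw [hsplit, ← div_div, Int.floor_div_natCast]
  norm_cast

lemma mem_dyadicI_iff_of_le {x y : ℝ} {p p' : ℤ × ℤ} (h : p.1 ≤ p'.1)
    (hx : x ∈ dyadicI p) (hy : y ∈ dyadicI p) : x ∈ dyadicI p' ↔ y ∈ dyadicI p' := by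
  rw [mem_dyadicI_iff] at hx hy ⊢
  rw [mem_dyadicI_iff, floor_div_two_zpow_of_le h, floor_div_two_zpow_of_le h, hx, hy]

lemma mem_dyadicI_iff_mem_children {x : ℝ} {p : ℤ × ℤ} :
    x ∈ dyadicI p ↔ x ∈ dyadicI (p.1 - 1, 2 * p.2) ∨ x ∈ dyadicI (p.1 - 1, 2 * p.2 + 1) := by
  simp only [mem_dyadicI_iff]
  rw [floor_div_two_zpow_of_le (sub_le_self p.1 zero_le_one), sub_sub_cancel, Int.toNat_one,
    pow_one]
  omega

lemma left_mem_dyadicI (p : ℤ × ℤ) : (p.2 : ℝ) * 2 ^ p.1 ∈ dyadicI p := by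
  rw [mem_dyadicI_iff, mul_div_cancel_right₀ _ (zpow_ne_zero _ two_ne_zero), Int.floor_intCast]

lemma measurableSet_dyadicI (p : ℤ × ℤ) : MeasurableSet (dyadicI p) := measurableSet_Ico

lemma volume_dyadicI (p : ℤ × ℤ) : volume (dyadicI p) = ENNReal.ofReal (dlen p) := by
  rw [dyadicI, Real.volume_Ico, dlen]
  ring_nf

lemma volume_real_dyadicI (p : ℤ × ℤ) : volume.real (dyadicI p) = dlen p := by
  rw [measureReal_def, volume_dyadicI, ENNReal.toReal_ofReal (dlen_pos p).le]

lemma volume_dyadicI_lt_top (p : ℤ × ℤ) : volume (dyadicI p) < ⊤ := by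
  rw [volume_dyadicI]
  exact ENNReal.ofReal_lt_top

lemma integrable_indicator_dyadicI (p : ℤ × ℤ) :
    Integrable ((dyadicI p).indicator (1 : ℝ → ℝ)) :=
  (integrable_indicator_iff (measurableSet_dyadicI p)).2 <|
    integrableOn_const (volume_dyadicI_lt_top p).ne

lemma integral_indicator_dyadicI (p : ℤ × ℤ) : ∫ x, (dyadicI p).indicator 1 x = dlen p := by
  rw [integral_indicator_one (measurableSet_dyadicI p), volume_real_dyadicI]

lemma integral_nind (p : ℤ × ℤ) : ∫ x, nind p x = 1 := by
  simp only [nind]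
  rw [integral_const_mul, integral_indicator_dyadicI, inv_mul_cancel₀ (dlen_pos p).ne']

lemma dyadicR_indicator (r : RectIx) (z : ℝ × ℝ) :
    (dyadicR r).indicator (1 : ℝ × ℝ → ℝ) z
      = (dyadicI r.1).indicator 1 z.1 * (dyadicI r.2).indicator 1 z.2 := by
  simp only [dyadicR, indicator_apply, mem_prod]
  split_ifs <;> simp_all

lemma haar_eq_zero_of_notMem {p : ℤ × ℤ} {x : ℝ} (hx : x ∉ dyadicI p) : haar p x = 0 := by
  rw [mem_dyadicI_iff_mem_children, not_or] at hx
  simp [haar, indicator_of_notMem hx.1, indicator_of_notMem hx.2]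

lemma abs_haar_le (p : ℤ × ℤ) (x : ℝ) : |haar p x| ≤ (2 : ℝ) ^ (-(p.1 : ℝ) / 2) := by
  have hpos : (0 : ℝ) < 2 ^ (-(p.1 : ℝ) / 2) := Real.rpow_pos_of_pos two_pos _
  unfold haar
  by_cases h1 : x ∈ dyadicI (p.1 - 1, 2 * p.2) <;>
    by_cases h2 : x ∈ dyadicI (p.1 - 1, 2 * p.2 + 1) <;>
      simp [h1, h2, abs_of_pos hpos, hpos.le]

lemma measurable_haar (p : ℤ × ℤ) : Measurable (haar p) :=
  ((measurable_one.indicator (measurableSet_dyadicI _)).sub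
    (measurable_one.indicator (measurableSet_dyadicI _))).const_mul _

lemma integrable_haar (p : ℤ × ℤ) : Integrable (haar p) :=
  ((integrable_indicator_dyadicI _).sub (integrable_indicator_dyadicI _)).const_mul _

lemma integrable_haar_mul_haar (p p' : ℤ × ℤ) : Integrable fun x => haar p x * haar p' x :=
  (integrable_haar p').bdd_mul (measurable_haar p).aestronglyMeasurable
    (Filter.Eventually.of_forall fun x => (Real.norm_eq_abs _).trans_le (abs_haar_le p x))

lemma integral_haar (p : ℤ × ℤ) : ∫ x, haar p x = 0 := by
  simp only [haar]
  rw [integral_const_mul, integral_sub (integrable_indicator_dyadicI _)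
    (integrable_indicator_dyadicI _), integral_indicator_dyadicI, integral_indicator_dyadicI]
  simp [dlen]

lemma haar_mul_self (p : ℤ × ℤ) (x : ℝ) : haar p x * haar p x = nind p x := by
  have hscale : (2 : ℝ) ^ (-(p.1 : ℝ) / 2) * 2 ^ (-(p.1 : ℝ) / 2) = (dlen p)⁻¹ := by
    rw [← Real.rpow_add two_pos, dlen, ← Real.rpow_intCast, ← Real.rpow_neg two_pos.le]
    ring_nf
  have hchild : x ∈ dyadicI (p.1 - 1, 2 * p.2) → x ∉ dyadicI (p.1 - 1, 2 * p.2 + 1) := by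
    simp only [mem_dyadicI_iff]
    omega
  have hmem := (mem_dyadicI_iff_mem_children (x := x) (p := p))
  simp only [haar, nind, indicator_apply, Pi.one_apply]
  split_ifs <;> simp_all

lemma haar_eq_of_lt {p p' : ℤ × ℤ} (h : p.1 < p'.1) {x y : ℝ} (hx : x ∈ dyadicI p)
    (hy : y ∈ dyadicI p) : haar p' x = haar p' y := by
  have hle : ∀ m : ℤ, p.1 ≤ (p'.1 - 1, m).1 := fun _ => by dsimp only; omega
  simp only [haar, indicator_apply, Pi.one_apply, mem_dyadicI_iff_of_le (hle _) hx hy]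

lemma integral_haar_mul_haar_of_lt {p p' : ℤ × ℤ} (h : p.1 < p'.1) :
    ∫ x, haar p x * haar p' x = 0 := by
  have hconst : ∀ x, haar p x * haar p' x = haar p' (p.2 * 2 ^ p.1) * haar p x := fun x => by
    by_cases hx : x ∈ dyadicI p
    · rw [haar_eq_of_lt h hx (left_mem_dyadicI p), mul_comm]
    · simp [haar_eq_zero_of_notMem hx]
  simp_rw [hconst, integral_const_mul, integral_haar, mul_zero]

lemma integral_haar_mul_haar (p p' : ℤ × ℤ) :
    ∫ x, haar p x * haar p' x = if p = p' then 1 else 0 := by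
  split_ifs with hpp
  · simp_rw [hpp, haar_mul_self, integral_nind]
  rcases lt_trichotomy p.1 p'.1 with h | h | h
  · exact integral_haar_mul_haar_of_lt h
  · have hdisj : ∀ x, haar p x * haar p' x = 0 := fun x => by
      by_cases hx : x ∈ dyadicI p
      · have hx' : x ∉ dyadicI p' := by
          rw [mem_dyadicI_iff] at hx ⊢
          rw [← h, hx]
          exact fun h2 => hpp (Prod.ext h h2)
        rw [haar_eq_zero_of_notMem hx', mul_zero]
      · rw [haar_eq_zero_of_notMem hx, zero_mul]
    simp [hdisj]
  · exact (integral_congr_ae (.of_forall fun x => mul_comm _ _)).trans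
      (integral_haar_mul_haar_of_lt h)

lemma haarR_mul_haarR (r r' : RectIx) (z : ℝ × ℝ) :
    haarR r z * haarR r' z = haar r.1 z.1 * haar r'.1 z.1 * (haar r.2 z.2 * haar r'.2 z.2) := by
  simp only [haarR]
  ring

lemma integrable_haarR_mul_haarR (r r' : RectIx) :
    Integrable fun z : ℝ × ℝ => haarR r z * haarR r' z := by
  simp_rw [haarR_mul_haarR]
  rw [Measure.volume_eq_prod]
  exact (integrable_haar_mul_haar _ _).mul_prod (integrable_haar_mul_haar _ _)

lemma integral_haarR_mul_haarR (r r' : RectIx) :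
    ∫ z : ℝ × ℝ, haarR r z * haarR r' z = if r = r' then 1 else 0 := by
  simp_rw [haarR_mul_haarR]
  rw [Measure.volume_eq_prod, integral_prod_mul (fun x => haar r.1 x * haar r'.1 x)
    (fun y => haar r.2 y * haar r'.2 y), integral_haar_mul_haar, integral_haar_mul_haar]
  simp only [Prod.ext_iff]
  split_ifs <;> simp_all

lemma haarCoefR_tsum_haarR {s : Finset RectIx} {c : RectIx → ℝ} (hc : ∀ r ∉ s, c r = 0)
    (r : RectIx) : haarCoefR (fun z => ∑' r', c r' * haarR r' z) r = c r := by
  have hfin : ∀ z, ∑' r', c r' * haarR r' z = ∑ r' ∈ s, c r' * haarR r' z := fun z =>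
    tsum_eq_sum fun r' hr' => by rw [hc r' hr', zero_mul]
  simp_rw [haarCoefR, hfin, Finset.sum_mul, mul_assoc]
  rw [integral_finsetSum _ fun r' _ => (integrable_haarR_mul_haarR r' r).const_mul (c r')]
  simp_rw [integral_const_mul, integral_haarR_mul_haarR, mul_ite, mul_one, mul_zero]
  rw [Finset.sum_ite_eq']
  split_ifs with h
  · rfl
  · exact (hc r h).symm

lemma coefSnd_sum_haarR (s : Finset RectIx) (c : RectIx → ℝ) (q : ℤ × ℤ) (x : ℝ) :
    coefSnd (fun z => ∑ r ∈ s, c r * haarR r z) q x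
      = ∑ r ∈ s, if r.2 = q then c r * haar r.1 x else 0 := by
  have hexpand : ∀ y, (∑ r ∈ s, c r * haarR r (x, y)) * haar q y
      = ∑ r ∈ s, c r * haar r.1 x * (haar r.2 y * haar q y) := fun y => by
    rw [Finset.sum_mul]
    refine Finset.sum_congr rfl fun r _ => ?_
    simp only [haarR]
    ring
  simp_rw [coefSnd, hexpand]
  rw [integral_finsetSum _ fun r _ => (integrable_haar_mul_haar r.2 q).const_mul _]
  simp_rw [integral_const_mul, integral_haar_mul_haar, mul_ite, mul_one, mul_zero]

lemma FinHaar2.exists_finset_bound_coefSnd {f : ℝ × ℝ → ℝ} (hf : FinHaar2 f) :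
    ∃ (Q : Finset (ℤ × ℤ)) (C : ℝ), (∀ q ∉ Q, coefSnd f q = 0) ∧ ∀ q x, |coefSnd f q x| ≤ C := by
  obtain ⟨s, c, rfl⟩ := hf
  refine ⟨s.image Prod.snd, ∑ r ∈ s, |c r| * 2 ^ (-(r.1.1 : ℝ) / 2), fun q hq => ?_,
    fun q x => ?_⟩
  · funext x
    rw [coefSnd_sum_haarR]
    exact Finset.sum_eq_zero fun r hr =>
      if_neg fun h : r.2 = q => hq (h ▸ Finset.mem_image_of_mem _ hr)
  · rw [coefSnd_sum_haarR]
    refine (Finset.abs_sum_le_sum_abs _ _).trans (Finset.sum_le_sum fun r _ => ?_)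
    split_ifs
    · rw [abs_mul]
      exact mul_le_mul_of_nonneg_left (abs_haar_le _ _) (abs_nonneg _)
    · rw [abs_zero]
      positivity

lemma FinHaar2.comp_swap {f : ℝ × ℝ → ℝ} (hf : FinHaar2 f) : FinHaar2 (f ∘ Prod.swap) := by
  obtain ⟨s, c, rfl⟩ := hf
  refine ⟨s.image Prod.swap, c ∘ Prod.swap, funext fun z => ?_⟩
  rw [Finset.sum_image Prod.swap_injective.injOn]
  refine Finset.sum_congr rfl fun r _ => ?_
  simp only [Function.comp_apply, Prod.swap_swap, haarR, Prod.fst_swap, Prod.snd_swap]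
  ring

lemma coefFst_eq_coefSnd_comp_swap (g : ℝ × ℝ → ℝ) : coefFst g = coefSnd (g ∘ Prod.swap) := rfl

lemma indicator_one_nonneg {α : Type*} (s : Set α) (a : α) : 0 ≤ s.indicator (1 : α → ℝ) a :=
  indicator_nonneg (fun _ _ => zero_le_one) a

lemma avgI_zero (p : ℤ × ℤ) : avgI 0 p = 0 := by
  simp [avgI]

lemma abs_avgI_le {u : ℝ → ℝ} {C : ℝ} (hu : ∀ x, |u x| ≤ C) (p : ℤ × ℤ) : |avgI u p| ≤ C := by
  have hint : |∫ x in dyadicI p, u x| ≤ C * dlen p := by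
    simpa [volume_real_dyadicI] using norm_setIntegral_le_of_norm_le_const
      (volume_dyadicI_lt_top p) fun x _ => (Real.norm_eq_abs _).trans_le (hu x)
  rw [avgI, abs_mul, abs_inv, abs_of_pos (dlen_pos p), inv_mul_le_iff₀ (dlen_pos p), mul_comm]
  exact hint

lemma abs_avgI_le_dyadMax {u : ℝ → ℝ} {C : ℝ} (hu : ∀ x, |u x| ≤ C) {x : ℝ} {p : ℤ × ℤ}
    (hx : x ∈ dyadicI p) : |avgI u p| ≤ dyadMax u x :=
  le_ciSup (f := fun p : {p : ℤ × ℤ // x ∈ dyadicI p} => |avgI u p.1|)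
    ⟨C, by rintro _ ⟨p', rfl⟩; exact abs_avgI_le hu p'.1⟩ ⟨p, hx⟩

lemma dyadMax_zero (x : ℝ) : dyadMax 0 x = 0 := by
  simp [dyadMax, avgI_zero]

lemma S2M1_sq {f : ℝ × ℝ → ℝ} {Q : Finset (ℤ × ℤ)} (hQ : ∀ q ∉ Q, coefSnd f q = 0)
    (z : ℝ × ℝ) : S2M1 f z ^ 2
      = ∑ q ∈ Q, dyadMax (coefSnd f q) z.1 ^ 2 * (dlen q)⁻¹ * (dyadicI q).indicator 1 z.2 := by
  rw [S2M1, tsum_eq_sum fun q hq => by rw [hQ q hq, dyadMax_zero]; ring, Real.sq_sqrt]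
  exact Finset.sum_nonneg fun q _ => by
    have := dlen_pos q
    have := indicator_one_nonneg (dyadicI q) z.2
    positivity

lemma M2S1_nonneg (g : ℝ × ℝ → ℝ) (z : ℝ × ℝ) : 0 ≤ M2S1 g z :=
  Real.iSup_nonneg fun _ => Real.sqrt_nonneg _

lemma sum_le_M2S1_sq {g : ℝ × ℝ → ℝ} {P : Finset (ℤ × ℤ)} {D : ℝ}
    (hP : ∀ p ∉ P, coefFst g p = 0) (hD : ∀ p y, |coefFst g p y| ≤ D) {z : ℝ × ℝ}
    {q : ℤ × ℤ} (hq : z.2 ∈ dyadicI q) :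
    ∑ p ∈ P, avgI (coefFst g p) q ^ 2 * (dlen p)⁻¹ * (dyadicI p).indicator 1 z.1
      ≤ M2S1 g z ^ 2 := by
  have hfin : ∀ q' : ℤ × ℤ,
      ∑' p, avgI (coefFst g p) q' ^ 2 * (dlen p)⁻¹ * (dyadicI p).indicator 1 z.1
        = ∑ p ∈ P, avgI (coefFst g p) q' ^ 2 * (dlen p)⁻¹ * (dyadicI p).indicator 1 z.1 :=
    fun q' => tsum_eq_sum fun p hp => by rw [hP p hp, avgI_zero]; ring
  have hterm : ∀ p q' : ℤ × ℤ,
      avgI (coefFst g p) q' ^ 2 * (dlen p)⁻¹ * (dyadicI p).indicator 1 z.1 ≤ D ^ 2 * (dlen p)⁻¹ := by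
    intro p q'
    have havg : avgI (coefFst g p) q' ^ 2 ≤ D ^ 2 := by
      rw [← sq_abs]
      exact pow_le_pow_left₀ (abs_nonneg _) (abs_avgI_le (hD p) q') 2
    have := dlen_pos p
    by_cases hx : z.1 ∈ dyadicI p
    · rw [indicator_of_mem hx, Pi.one_apply, mul_one]
      gcongr
    · rw [indicator_of_notMem hx, mul_zero]
      positivity
  have hbdd : BddAbove (range fun q' : {q' : ℤ × ℤ // z.2 ∈ dyadicI q'} =>
      √(∑' p, avgI (coefFst g p) q'.1 ^ 2 * (dlen p)⁻¹ * (dyadicI p).indicator 1 z.1)) := by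
    refine ⟨√(∑ p ∈ P, D ^ 2 * (dlen p)⁻¹), ?_⟩
    rintro _ ⟨q', rfl⟩
    dsimp only
    rw [hfin]
    exact Real.sqrt_le_sqrt (Finset.sum_le_sum fun p _ => hterm p q'.1)
  rw [← Real.sqrt_le_left (M2S1_nonneg g z), ← hfin]
  exact le_ciSup hbdd ⟨q, hq⟩

lemma sq_avgI_mul_le {u : ℝ → ℝ} {C : ℝ} (hu : ∀ x, |u x| ≤ C) (b : ℝ) (r : RectIx)
    (z : ℝ × ℝ) :
    (avgI u r.1 * b) ^ 2 * (rlen r)⁻¹ * (dyadicR r).indicator 1 z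
      ≤ dyadMax u z.1 ^ 2 * (dlen r.2)⁻¹ * (dyadicI r.2).indicator 1 z.2
        * (b ^ 2 * (dlen r.1)⁻¹ * (dyadicI r.1).indicator 1 z.1) := by
  have := dlen_pos r.1
  have := dlen_pos r.2
  have := indicator_one_nonneg (dyadicI r.1) z.1
  have := indicator_one_nonneg (dyadicI r.2) z.2
  rw [dyadicR_indicator, rlen]
  by_cases hx : z.1 ∈ dyadicI r.1
  · have hmax : avgI u r.1 ^ 2 ≤ dyadMax u z.1 ^ 2 := by
      rw [← sq_abs]
      exact pow_le_pow_left₀ (abs_nonneg _) (abs_avgI_le_dyadMax hu hx) 2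
    calc _ = avgI u r.1 ^ 2 * (dlen r.2)⁻¹ * (dyadicI r.2).indicator 1 z.2
          * (b ^ 2 * (dlen r.1)⁻¹ * (dyadicI r.1).indicator 1 z.1) := by
          rw [mul_pow, mul_inv]
          ring
      _ ≤ _ := by gcongr
  · rw [indicator_of_notMem hx, zero_mul, mul_zero, mul_zero]
    positivity

theorem Finset.sum_product_le_sum_mul {R ι κ : Type*} [CommSemiring R] [PartialOrder R]
    [IsOrderedRing R] (P : Finset ι) (Q : Finset κ) {F : ι × κ → R} {A : κ → R}
    {B : ι → κ → R} {G : R} (hF : ∀ p q, F (p, q) ≤ A q * B p q) (hA : ∀ q, 0 ≤ A q)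
    (hB : ∀ q, A q ≠ 0 → ∑ p ∈ P, B p q ≤ G) :
    ∑ r ∈ P ×ˢ Q, F r ≤ (∑ q ∈ Q, A q) * G := by
  rw [Finset.sum_product_right, Finset.sum_mul]
  refine Finset.sum_le_sum fun q _ => ?_
  calc ∑ p ∈ P, F (p, q) ≤ A q * ∑ p ∈ P, B p q := by
        rw [Finset.mul_sum]
        exact Finset.sum_le_sum fun p _ => hF p q
    _ ≤ A q * G := by
        rcases eq_or_ne (A q) 0 with h | h
        · rw [h, zero_mul, zero_mul]
        · exact mul_le_mul_of_nonneg_left (hB q h) (hA q)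

/-- Pointwise bound `S(π³_g f) ≤ S₂M₁(f) · M₂S₁(g)` for the mixed
bi-parameter paraproduct `π³_g`. -/
theorem sq_pi3_le_S2M1_mul_M2S1 (f g : ℝ × ℝ → ℝ)
    (hf : FinHaar2 f) (hg : FinHaar2 g) (z : ℝ × ℝ) :
    sqR (pi3 g f) z ≤ S2M1 f z * M2S1 g z := by
  obtain ⟨Q, C, hQ, hC⟩ := hf.exists_finset_bound_coefSnd
  obtain ⟨P, D, hP, hD⟩ := hg.comp_swap.exists_finset_bound_coefSnd
  rw [← coefFst_eq_coefSnd_comp_swap] at hP hD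
  set a : RectIx → ℝ := fun r => avgI (coefSnd f r.2) r.1 * avgI (coefFst g r.1) r.2
  have ha : ∀ r ∉ P ×ˢ Q, a r = 0 := by
    intro r hr
    rcases not_and_or.1 (Finset.mem_product.not.1 hr) with h | h
    · simp only [a, hP _ h, avgI_zero, mul_zero]
    · simp only [a, hQ _ h, avgI_zero, zero_mul]
  have hcoef : haarCoefR (pi3 g f) = a := funext (haarCoefR_tsum_haarR ha)
  rw [sqR, hcoef, tsum_eq_sum fun r hr => by rw [ha r hr]; ring, Real.sqrt_le_iff, mul_pow,
    S2M1_sq hQ]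
  refine ⟨mul_nonneg (Real.sqrt_nonneg _) (M2S1_nonneg g z),
    Finset.sum_product_le_sum_mul P Q (fun p q => sq_avgI_mul_le (hC q) _ (p, q) z)
      (fun q => by
        have := dlen_pos q
        have := indicator_one_nonneg (dyadicI q) z.2
        positivity) fun q hq =>
        sum_le_M2S1_sq hP hD (mem_of_indicator_ne_zero (right_ne_zero_of_mul hq))⟩
end
end

section
/- Let 0 < p ≤ 2, let {𝒞_k}_{k∈ℤ} be finite ½-sparse families of dyadic rectangles (only finitely many nonempty), and let λ(R), for R ∈ 𝒞 := ∪_k 𝒞_k, be the largest k with R ∈ 𝒞_k. Set f = Σ_{R∈𝒞} 2^{tλ(R)} |R|^{1/2} h_R for some t > 0. Then ‖S(f)‖_{L^p(ℝ²)}^p ≲ Σ_{k∈ℤ} 2^{ptk} |∪_{R∈𝒞_k} R|, with implicit constant depending only on p. -/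
open MeasureTheory Set
open scoped ENNReal Classical

noncomputable section

/-! Haar functions are orthonormal, so the square function of `f` is
`S(f)² = Σ_{R ∈ 𝒞} 2^{2tλ(R)} χ_R`. Since `R ∈ 𝒞_{λ(R)}`, this is at most `Σ_k 2^{2tk} N_k` with
`N_k = Σ_{R ∈ 𝒞_k} χ_R`, and as `p/2 ≤ 1` the `p/2`-th power is subadditive. Each `N_k` is
`ℕ`-valued, so `N_k^{p/2} ≤ N_k`, and `∫ N_k = Σ |R| ≤ 2 Σ |E_R| ≤ 2 |⋃ R|` by sparseness;
hence `C = 2` works. -/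

section Sparse

variable {α ι : Type*}

lemma rpow_sum_indicator_le_sum_indicator {θ : ℝ} (hθ0 : 0 < θ) (hθ1 : θ ≤ 1) (s : Finset ι)
    (A : ι → Set α) (x : α) :
    (∑ i ∈ s, (A i).indicator (1 : α → ℝ≥0∞) x) ^ θ ≤ ∑ i ∈ s, (A i).indicator 1 x := by
  by_cases hx : ∃ i ∈ s, x ∈ A i
  · obtain ⟨i, hi, hxi⟩ := hx
    have hone : 1 ≤ ∑ i ∈ s, (A i).indicator (1 : α → ℝ≥0∞) x := by
      simpa [indicator_of_mem hxi] using
        Finset.single_le_sum (f := fun i => (A i).indicator (1 : α → ℝ≥0∞) x)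
          (fun _ _ => zero_le) hi
    simpa using ENNReal.rpow_le_rpow_of_exponent_le hone hθ1
  · push Not at hx
    rw [Finset.sum_eq_zero fun i hi => indicator_of_notMem (hx i hi) _,
      ENNReal.zero_rpow_of_pos hθ0]

variable [MeasurableSpace α] {μ : Measure α}

theorem lintegral_rpow_sum_indicator_le_of_sparse {θ : ℝ} (hθ0 : 0 < θ) (hθ1 : θ ≤ 1)
    {s : Finset ι} {A E : ι → Set α} {C : ℝ≥0∞}
    (hA : ∀ i ∈ s, MeasurableSet (A i)) (hE : ∀ i ∈ s, MeasurableSet (E i))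
    (hEA : ∀ i ∈ s, E i ⊆ A i) (hAE : ∀ i ∈ s, μ (A i) ≤ C * μ (E i))
    (hdisj : (s : Set ι).PairwiseDisjoint E) :
    ∫⁻ x, (∑ i ∈ s, (A i).indicator 1 x) ^ θ ∂μ ≤ C * μ (⋃ i ∈ s, A i) :=
  calc ∫⁻ x, (∑ i ∈ s, (A i).indicator 1 x) ^ θ ∂μ
      ≤ ∫⁻ x, ∑ i ∈ s, (A i).indicator 1 x ∂μ :=
        lintegral_mono fun x => rpow_sum_indicator_le_sum_indicator hθ0 hθ1 s A x
    _ = ∑ i ∈ s, μ (A i) := by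
        rw [lintegral_finsetSum s (f := fun i => (A i).indicator 1)
          fun i hi => measurable_one.indicator (hA i hi)]
        exact Finset.sum_congr rfl fun i hi => lintegral_indicator_one (hA i hi)
    _ ≤ ∑ i ∈ s, C * μ (E i) := Finset.sum_le_sum hAE
    _ = C * μ (⋃ i ∈ s, E i) := by rw [← Finset.mul_sum, measure_biUnion_finset hdisj hE]
    _ ≤ C * μ (⋃ i ∈ s, A i) := by gcongr with i hi; exact hEA i hi

end Sparse

lemma Finset.sum_le_sum_sum_of_mapsTo {ι κ M : Type*} [AddCommMonoid M] [PartialOrder M]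
    [CanonicallyOrderedAdd M] {s : Finset ι} {t : Finset κ} {C : κ → Finset ι} {g : ι → κ}
    (h : ∀ i ∈ s, g i ∈ t ∧ i ∈ C (g i)) (f : κ → ι → M) :
    ∑ i ∈ s, f (g i) i ≤ ∑ k ∈ t, ∑ i ∈ C k, f k i := by
  rw [← Finset.sum_fiberwise_of_maps_to fun i hi => (h i hi).1]
  refine Finset.sum_le_sum fun k _ => ?_
  calc ∑ i ∈ s with g i = k, f (g i) i = ∑ i ∈ s with g i = k, f k i :=
        Finset.sum_congr rfl fun i hi => by rw [(Finset.mem_filter.1 hi).2]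
    _ ≤ ∑ i ∈ C k, f k i := Finset.sum_le_sum_of_subset fun i hi => by
        obtain ⟨his, rfl⟩ := Finset.mem_filter.1 hi
        exact (h i his).2

namespace DyadicSquare

lemma mem_dyadicI_iff {p : ℤ × ℤ} {x : ℝ} : x ∈ dyadicI p ↔ ⌊x / 2 ^ p.1⌋ = p.2 := by
  have h : (0 : ℝ) < 2 ^ p.1 := by positivity
  rw [Int.floor_eq_iff, le_div_iff₀ h, div_lt_iff₀ h]
  rfl

lemma floor_div_two_zpow_of_le {k k' : ℤ} (h : k' ≤ k) (x : ℝ) :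
    ⌊x / 2 ^ k⌋ = ⌊x / 2 ^ k'⌋ / 2 ^ (k - k').toNat := by
  have hk : (2 : ℝ) ^ k = 2 ^ k' * ((2 ^ (k - k').toNat : ℤ) : ℝ) := by
    rw [Int.cast_pow, Int.cast_ofNat, ← zpow_natCast, ← zpow_add₀ two_ne_zero]
    congr 1
    omega
  rw [hk, ← div_div, Int.floor_div_cast_of_nonneg (by positivity)]

lemma left_mem_dyadicI (p : ℤ × ℤ) : (p.2 : ℝ) * 2 ^ p.1 ∈ dyadicI p :=
  left_mem_Ico.2 (by gcongr; linarith)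

lemma measurableSet_dyadicI (p : ℤ × ℤ) : MeasurableSet (dyadicI p) := measurableSet_Ico

lemma volume_dyadicI (p : ℤ × ℤ) : volume (dyadicI p) = ENNReal.ofReal (dlen p) := by
  rw [dyadicI, Real.volume_Ico, dlen]
  ring_nf

lemma dlen_pos (p : ℤ × ℤ) : 0 < dlen p := zpow_pos two_pos _

lemma integral_indicator_dyadicI (p : ℤ × ℤ) :
    ∫ x, (dyadicI p).indicator (1 : ℝ → ℝ) x = dlen p := by
  rw [integral_indicator_one (measurableSet_dyadicI p), measureReal_def, volume_dyadicI,
    ENNReal.toReal_ofReal (dlen_pos p).le]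

lemma integrable_indicator_dyadicI (p : ℤ × ℤ) :
    Integrable ((dyadicI p).indicator (1 : ℝ → ℝ)) :=
  (integrable_indicator_iff (measurableSet_dyadicI p)).2
    (integrableOn_const (by rw [volume_dyadicI]; exact ENNReal.ofReal_ne_top))

lemma haar_eq_of_floor_eq {p : ℤ × ℤ} {x y : ℝ}
    (h : ⌊x / 2 ^ (p.1 - 1)⌋ = ⌊y / 2 ^ (p.1 - 1)⌋) : haar p x = haar p y := by
  simp only [haar, indicator_apply, mem_dyadicI_iff, Pi.one_apply, h]

lemma haar_eq_of_mem_dyadicI {p q : ℤ × ℤ} (hqp : q.1 < p.1) {x y : ℝ}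
    (hx : x ∈ dyadicI q) (hy : y ∈ dyadicI q) : haar p x = haar p y := by
  rw [mem_dyadicI_iff] at hx hy
  apply haar_eq_of_floor_eq
  rw [floor_div_two_zpow_of_le (by omega : q.1 ≤ p.1 - 1), hx,
    floor_div_two_zpow_of_le (by omega : q.1 ≤ p.1 - 1), hy]

lemma floor_div_two_zpow_eq_div_two (k : ℤ) (x : ℝ) :
    ⌊x / 2 ^ k⌋ = ⌊x / 2 ^ (k - 1)⌋ / 2 := by
  simp [floor_div_two_zpow_of_le (sub_le_self k zero_le_one) x]

lemma haar_eq_zero_of_notMem {p : ℤ × ℤ} {x : ℝ} (hx : x ∉ dyadicI p) : haar p x = 0 := by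
  rw [mem_dyadicI_iff, floor_div_two_zpow_eq_div_two] at hx
  simp only [haar, indicator_apply, mem_dyadicI_iff]
  generalize ⌊x / 2 ^ (p.1 - 1)⌋ = m at *
  split_ifs <;> first | omega | simp

lemma haar_mul_self (p : ℤ × ℤ) (x : ℝ) :
    haar p x * haar p x = (dlen p)⁻¹ * (dyadicI p).indicator 1 x := by
  have hsq : (2 : ℝ) ^ (-(p.1 : ℝ) / 2) * 2 ^ (-(p.1 : ℝ) / 2) = (dlen p)⁻¹ := by
    rw [← Real.rpow_add two_pos, add_halves, Real.rpow_neg zero_le_two, Real.rpow_intCast, dlen]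
  by_cases hx : x ∈ dyadicI p
  · have hm := hx
    rw [mem_dyadicI_iff, floor_div_two_zpow_eq_div_two] at hm
    rw [indicator_of_mem hx, Pi.one_apply, mul_one, ← hsq]
    simp only [haar, indicator_apply, mem_dyadicI_iff, Pi.one_apply]
    generalize ⌊x / 2 ^ (p.1 - 1)⌋ = m at *
    split_ifs <;> first | omega | ring
  · rw [haar_eq_zero_of_notMem hx, indicator_of_notMem hx]
    simp

lemma abs_haar_le (p : ℤ × ℤ) (x : ℝ) : |haar p x| ≤ 2 ^ (-(p.1 : ℝ) / 2) := by
  have h0 : (0 : ℝ) ≤ 2 ^ (-(p.1 : ℝ) / 2) := by positivity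
  simp only [haar, indicator_apply, abs_mul, abs_of_nonneg h0]
  split_ifs <;> simp [h0]

lemma measurable_haar (p : ℤ × ℤ) : Measurable (haar p) :=
  ((measurable_const.indicator (measurableSet_dyadicI _)).sub
    (measurable_const.indicator (measurableSet_dyadicI _))).const_mul _

lemma integrable_haar (p : ℤ × ℤ) : Integrable (haar p) :=
  ((integrable_indicator_dyadicI _).sub (integrable_indicator_dyadicI _)).const_mul _

lemma integral_haar (p : ℤ × ℤ) : ∫ x, haar p x = 0 := by
  simp only [haar]
  rw [integral_const_mul, integral_sub (integrable_indicator_dyadicI _)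
    (integrable_indicator_dyadicI _), integral_indicator_dyadicI, integral_indicator_dyadicI]
  simp [dlen]

lemma integrable_haar_mul_haar (p q : ℤ × ℤ) : Integrable (fun x => haar p x * haar q x) :=
  (integrable_haar p).mul_bdd (measurable_haar q).aestronglyMeasurable
    (ae_of_all _ fun x => (Real.norm_eq_abs _).trans_le (abs_haar_le q x))

lemma integral_haar_mul_haar_of_lt {p q : ℤ × ℤ} (hqp : q.1 < p.1) :
    ∫ x, haar p x * haar q x = 0 := by
  -- `haar p` is constant on the support of `haar q`, and `haar q` has mean zero.
  have hconst : ∀ x, haar p x * haar q x = haar p (q.2 * 2 ^ q.1) * haar q x := by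
    intro x
    by_cases hx : x ∈ dyadicI q
    · rw [haar_eq_of_mem_dyadicI hqp hx (left_mem_dyadicI q)]
    · simp [haar_eq_zero_of_notMem hx]
  simp_rw [hconst]
  rw [integral_const_mul, integral_haar, mul_zero]

lemma integral_haar_mul_haar (p q : ℤ × ℤ) :
    ∫ x, haar p x * haar q x = if p = q then 1 else 0 := by
  split_ifs with hpq
  · subst hpq
    simp_rw [haar_mul_self]
    rw [integral_const_mul, integral_indicator_dyadicI, inv_mul_cancel₀ (dlen_pos p).ne']
  rcases lt_trichotomy p.1 q.1 with hlt | heq | hgt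
  · simp_rw [mul_comm (haar p _)]
    exact integral_haar_mul_haar_of_lt hlt
  · have hdisj : ∀ x, haar p x * haar q x = 0 := by
      intro x
      by_cases hx : x ∈ dyadicI p
      · have hq : x ∉ dyadicI q := by
          rw [mem_dyadicI_iff] at hx ⊢
          rw [← heq, hx]
          exact fun h => hpq (Prod.ext heq h)
        rw [haar_eq_zero_of_notMem hq, mul_zero]
      · rw [haar_eq_zero_of_notMem hx, zero_mul]
    simp [hdisj]
  · exact integral_haar_mul_haar_of_lt hgt

lemma rlen_pos (r : RectIx) : 0 < rlen r := mul_pos (dlen_pos r.1) (dlen_pos r.2)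

lemma haarR_mul_haarR (r s : RectIx) (z : ℝ × ℝ) :
    haarR r z * haarR s z = (haar r.1 z.1 * haar s.1 z.1) * (haar r.2 z.2 * haar s.2 z.2) := by
  simp only [haarR]
  ring

lemma integrable_haarR_mul_haarR (r s : RectIx) :
    Integrable (fun z : ℝ × ℝ => haarR r z * haarR s z) := by
  simp_rw [haarR_mul_haarR, Measure.volume_eq_prod]
  exact (integrable_haar_mul_haar r.1 s.1).mul_prod (integrable_haar_mul_haar r.2 s.2)

lemma integral_haarR_mul_haarR (r s : RectIx) :
    ∫ z : ℝ × ℝ, haarR r z * haarR s z = if r = s then 1 else 0 := by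
  simp_rw [haarR_mul_haarR, Measure.volume_eq_prod]
  rw [integral_prod_mul (fun x => haar r.1 x * haar s.1 x) (fun y => haar r.2 y * haar s.2 y),
    integral_haar_mul_haar, integral_haar_mul_haar]
  by_cases h1 : r.1 = s.1 <;> by_cases h2 : r.2 = s.2 <;> simp [h1, h2, Prod.ext_iff]

lemma haarCoefR_finset_sum (s : Finset RectIx) (c : RectIx → ℝ) (r : RectIx) :
    haarCoefR (fun z => ∑ r' ∈ s, c r' * haarR r' z) r = if r ∈ s then c r else 0 := by
  simp only [haarCoefR, Finset.sum_mul, mul_assoc]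
  rw [integral_finsetSum _ fun r' _ => (integrable_haarR_mul_haarR r' r).const_mul _]
  simp_rw [integral_const_mul, integral_haarR_mul_haarR, mul_ite, mul_one, mul_zero]
  exact Finset.sum_ite_eq' s r c

lemma sqR_finset_sum_haarR (s : Finset RectIx) (c : RectIx → ℝ) (z : ℝ × ℝ) :
    sqR (fun w => ∑ r ∈ s, c r * haarR r w) z =
      √(∑ r ∈ s, c r ^ 2 * (rlen r)⁻¹ * (dyadicR r).indicator 1 z) := by
  rw [sqR, tsum_eq_sum (s := s) fun r hr => by simp [haarCoefR_finset_sum, hr]]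
  exact congrArg _ (Finset.sum_congr rfl fun r hr => by rw [haarCoefR_finset_sum, if_pos hr])

lemma ofReal_sqR_finset_sum_haarR_rpow (s : Finset RectIx) (c : RectIx → ℝ) (z : ℝ × ℝ)
    (p : ℝ) :
    ENNReal.ofReal (sqR (fun w => ∑ r ∈ s, c r * haarR r w) z) ^ p =
      (∑ r ∈ s, ENNReal.ofReal (c r ^ 2 / rlen r) * (dyadicR r).indicator 1 z) ^ (p / 2) := by
  have hterm : ∀ r ∈ s, 0 ≤ c r ^ 2 * (rlen r)⁻¹ * (dyadicR r).indicator 1 z := fun r _ =>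
    mul_nonneg (mul_nonneg (sq_nonneg _) (inv_nonneg.2 (rlen_pos r).le))
      (indicator_nonneg (fun _ _ => zero_le_one) z)
  rw [sqR_finset_sum_haarR, Real.sqrt_eq_rpow,
    ← ENNReal.ofReal_rpow_of_nonneg (Finset.sum_nonneg hterm) one_half_pos.le,
    ← ENNReal.rpow_mul, one_div_mul_eq_div, ENNReal.ofReal_sum_of_nonneg hterm]
  congr 2 with r
  by_cases hz : z ∈ dyadicR r <;> simp [hz, div_eq_mul_inv]

lemma volume_dyadicR (r : RectIx) : volume (dyadicR r) = ENNReal.ofReal (rlen r) := by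
  rw [dyadicR, Measure.volume_eq_prod, Measure.prod_prod, volume_dyadicI, volume_dyadicI,
    ← ENNReal.ofReal_mul (dlen_pos _).le]
  rfl

lemma measurableSet_dyadicR (r : RectIx) : MeasurableSet (dyadicR r) :=
  (measurableSet_dyadicI r.1).prod (measurableSet_dyadicI r.2)

lemma volume_dyadicR_le_two_mul {r : RectIx} {E : Set (ℝ × ℝ)}
    (hE : ENNReal.ofReal (rlen r / 2) ≤ volume E) : volume (dyadicR r) ≤ 2 * volume E := by
  rw [volume_dyadicR, ← mul_div_cancel₀ (rlen r) two_ne_zero, ENNReal.ofReal_mul zero_le_two,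
    ENNReal.ofReal_ofNat]
  gcongr

lemma ofReal_sqR_rpow_le_sum {p t : ℝ} (hp0 : 0 < p) (hp2 : p ≤ 2) {S : Finset RectIx}
    {K : Finset ℤ} {𝒞 : ℤ → Finset RectIx} {lam : RectIx → ℤ}
    (hS : ∀ r ∈ S, lam r ∈ K ∧ r ∈ 𝒞 (lam r)) (z : ℝ × ℝ) :
    ENNReal.ofReal (sqR (fun w => ∑ r ∈ S, 2 ^ (t * lam r) * √(rlen r) * haarR r w) z) ^ p ≤
      ∑ k ∈ K, ENNReal.ofReal (2 ^ (p * t * k)) *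
        (∑ r ∈ 𝒞 k, (dyadicR r).indicator 1 z) ^ (p / 2) := by
  have hθ0 : 0 < p / 2 := by positivity
  have hcoef : ∀ r, (2 ^ (t * lam r) * √(rlen r)) ^ 2 / rlen r = (2 : ℝ) ^ (2 * t * lam r) := by
    intro r
    rw [mul_pow, Real.sq_sqrt (rlen_pos r).le, mul_div_cancel_right₀ _ (rlen_pos r).ne',
      ← Real.rpow_natCast, ← Real.rpow_mul zero_le_two]
    ring_nf
  have hpow : ∀ k : ℤ,
      ENNReal.ofReal (2 ^ (2 * t * k)) ^ (p / 2) = ENNReal.ofReal (2 ^ (p * t * k)) := by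
    intro k
    rw [ENNReal.ofReal_rpow_of_nonneg (by positivity) hθ0.le, ← Real.rpow_mul zero_le_two]
    ring_nf
  rw [ofReal_sqR_finset_sum_haarR_rpow]
  simp_rw [hcoef]
  calc (∑ r ∈ S, ENNReal.ofReal (2 ^ (2 * t * lam r)) * (dyadicR r).indicator 1 z) ^ (p / 2)
      ≤ (∑ k ∈ K, ENNReal.ofReal (2 ^ (2 * t * k)) * ∑ r ∈ 𝒞 k, (dyadicR r).indicator 1 z)
          ^ (p / 2) := by
        simp_rw [Finset.mul_sum]
        gcongr
        exact Finset.sum_le_sum_sum_of_mapsTo hS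
          fun k r => ENNReal.ofReal (2 ^ (2 * t * k)) * (dyadicR r).indicator 1 z
    _ ≤ ∑ k ∈ K, (ENNReal.ofReal (2 ^ (2 * t * k)) * ∑ r ∈ 𝒞 k, (dyadicR r).indicator 1 z)
          ^ (p / 2) :=
        Finset.le_sum_of_subadditive (· ^ (p / 2)) (ENNReal.zero_rpow_of_pos hθ0).le
          (fun x y => ENNReal.rpow_add_le_add_rpow x y hθ0.le (by linarith)) _ _
    _ = _ := by simp_rw [ENNReal.mul_rpow_of_nonneg _ _ hθ0.le, hpow]

lemma lintegral_sum_mul_rpow_sum_indicator_le {p : ℝ} (hp0 : 0 < p) (hp2 : p ≤ 2)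
    (K : Finset ℤ) {𝒞 : ℤ → Finset RectIx} {E : ℤ → RectIx → Set (ℝ × ℝ)}
    (hE : ∀ k, ∀ r ∈ 𝒞 k, MeasurableSet (E k r) ∧ E k r ⊆ dyadicR r ∧
      ENNReal.ofReal (rlen r / 2) ≤ volume (E k r))
    (hdisj : ∀ k, ((𝒞 k : Set RectIx)).PairwiseDisjoint (E k)) (w : ℤ → ℝ≥0∞) :
    ∫⁻ z, ∑ k ∈ K, w k * (∑ r ∈ 𝒞 k, (dyadicR r).indicator 1 z) ^ (p / 2) ≤
      2 * ∑ k ∈ K, w k * volume (⋃ r ∈ 𝒞 k, dyadicR r) := by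
  have hmeas : ∀ k, Measurable fun z =>
      (∑ r ∈ 𝒞 k, (dyadicR r).indicator (1 : ℝ × ℝ → ℝ≥0∞) z) ^ (p / 2) := fun k =>
    (Finset.measurable_sum _ fun r _ =>
      measurable_one.indicator (measurableSet_dyadicR r)).pow_const _
  rw [lintegral_finsetSum _ fun k _ => (hmeas k).const_mul _, Finset.mul_sum]
  refine Finset.sum_le_sum fun k _ => ?_
  rw [lintegral_const_mul _ (hmeas k), mul_left_comm]
  gcongr
  exact lintegral_rpow_sum_indicator_le_of_sparse (by positivity) (by linarith)
    (fun r _ => measurableSet_dyadicR r) (fun r hr => (hE k r hr).1)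
    (fun r hr => (hE k r hr).2.1) (fun r hr => volume_dyadicR_le_two_mul (hE k r hr).2.2)
    (hdisj k)

end DyadicSquare

open DyadicSquare

/-- For `0 < p ≤ 2`, finitely many finite `½`-sparse families `𝒞_k` of dyadic
rectangles, `λ(R)` the largest `k` with `R ∈ 𝒞_k`, and the test function
`f = Σ_{R∈𝒞} 2^{tλ(R)} |R|^{1/2} h_R`, one has
`‖S(f)‖_{L^p}^p ≲_p Σ_k 2^{ptk} |∪_{R∈𝒞_k} R|`. -/
theorem sq_test_function_bound (p : ℝ) (hp0 : 0 < p) (hp2 : p ≤ 2) :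
    ∃ C : ℝ, 0 < C ∧ ∀ t : ℝ, 0 < t →
      ∀ (𝒞 : ℤ → Finset RectIx) (lam : RectIx → ℤ) (E : ℤ → RectIx → Set (ℝ × ℝ)),
        {k : ℤ | (𝒞 k).Nonempty}.Finite →
        (∀ k, ∀ r ∈ 𝒞 k, MeasurableSet (E k r) ∧ E k r ⊆ dyadicR r ∧
          ENNReal.ofReal (rlen r / 2) ≤ volume (E k r)) →
        (∀ k, ((𝒞 k : Set RectIx)).PairwiseDisjoint (E k)) →
        (∀ k, ∀ r ∈ 𝒞 k, k ≤ lam r) →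
        (∀ r : RectIx, (∃ k, r ∈ 𝒞 k) → r ∈ 𝒞 (lam r)) →
        ∫⁻ z : ℝ × ℝ, (ENNReal.ofReal (sqR (fun w => ∑' r : RectIx,
              (if ∃ k, r ∈ 𝒞 k then (2 : ℝ) ^ (t * (lam r : ℝ)) * Real.sqrt (rlen r) else 0) *
                haarR r w) z)) ^ p ∂volume ≤
          ENNReal.ofReal C *
            ∑' k : ℤ, ENNReal.ofReal ((2 : ℝ) ^ (p * t * (k : ℝ))) *
              volume (⋃ r ∈ 𝒞 k, dyadicR r) := by
  refine ⟨2, two_pos, fun t _ 𝒞 lam E hfin hE hdisj _ hlam => ?_⟩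
  set K := hfin.toFinset
  set S := K.biUnion 𝒞
  have hS : ∀ r, r ∈ S ↔ ∃ k, r ∈ 𝒞 k := fun r => by
    simp only [S, K, Finset.mem_biUnion, Set.Finite.mem_toFinset, Set.mem_ofPred_eq]
    exact ⟨fun ⟨k, _, hk⟩ => ⟨k, hk⟩, fun ⟨k, hk⟩ => ⟨k, ⟨r, hk⟩, hk⟩⟩
  have hf : (fun w => ∑' r : RectIx, (if ∃ k, r ∈ 𝒞 k then (2 : ℝ) ^ (t * (lam r : ℝ)) *
      Real.sqrt (rlen r) else 0) * haarR r w) =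
      fun w => ∑ r ∈ S, 2 ^ (t * lam r) * √(rlen r) * haarR r w := by
    funext w
    rw [tsum_eq_sum (s := S) fun r hr => by rw [if_neg (mt (hS r).2 hr), zero_mul]]
    exact Finset.sum_congr rfl fun r hr => by rw [if_pos ((hS r).1 hr)]
  rw [hf, ENNReal.ofReal_ofNat]
  calc _ ≤ ∫⁻ z, ∑ k ∈ K, ENNReal.ofReal (2 ^ (p * t * k)) *
          (∑ r ∈ 𝒞 k, (dyadicR r).indicator 1 z) ^ (p / 2) :=
        lintegral_mono <| ofReal_sqR_rpow_le_sum hp0 hp2 fun r hr =>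
          ⟨by simpa [K] using ⟨r, hlam r ((hS r).1 hr)⟩, hlam r ((hS r).1 hr)⟩
    _ ≤ 2 * ∑ k ∈ K, ENNReal.ofReal (2 ^ (p * t * k)) * volume (⋃ r ∈ 𝒞 k, dyadicR r) :=
        lintegral_sum_mul_rpow_sum_indicator_le hp0 hp2 K hE hdisj _
    _ ≤ 2 * ∑' k : ℤ, ENNReal.ofReal (2 ^ (p * t * k)) * volume (⋃ r ∈ 𝒞 k, dyadicR r) := by
        gcongr
        exact ENNReal.sum_le_tsum K

end
end
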